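/- Let s, L be natural numbers with 0 < s < 2^L. The map from accepted inputs A = {x ∈ [0, 2^L) : (x·s) mod 2^L ≥ 2^L mod s} to [0, s) given by x ↦ (x·s) / 2^L is surjective, and the cardinality of A equals s · (2^L / s) (floor division), i.e., 2^L - (2^L mod s). -/

import Mathlib

/-!
Write `N = 2 ^ L`. If `x * s / N = y`, then `x * s % N = x * s - N * y`, so `x` is accepted with
output `y` exactly when `x * s` lies in `[N * y + N % s, N * y + N)`. This interval has length
`N - N % s = s * (N / s)`, a multiple of `s`, so it contains exactly `N / s` multiples of `s`: every
output `y < s` has `N / s ≥ 1` accepted preimages, and summing over the fibers gives the count.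
-/

open Finset

namespace Nat

lemma add_mul_ceilDiv {s : ℕ} (hs : 0 < s) (a k : ℕ) : (a + s * k) ⌈/⌉ s = a ⌈/⌉ s + k := by
  simp only [ceilDiv_eq_add_pred_div]
  rw [show a + s * k + s - 1 = a + s - 1 + s * k by omega, add_mul_div_left _ _ hs]

lemma mem_Ico_ceilDiv_iff {s : ℕ} (hs : 0 < s) {a b x : ℕ} :
    x ∈ Ico (a ⌈/⌉ s) (b ⌈/⌉ s) ↔ a ≤ s * x ∧ s * x < b := by
  simp only [mem_Ico, ceilDiv_le_iff_le_mul hs, ← not_le]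

end Nat

def accepted (N s : ℕ) : Finset ℕ :=
  (range N).filter fun x => N % s ≤ x * s % N

section accepted

variable {N s : ℕ}

lemma div_lt_of_mem_accepted (hs : 0 < s) {x : ℕ} (hx : x ∈ accepted N s) : x * s / N < s := by
  have hxN : x < N := mem_range.mp (mem_filter.mp hx).1
  rw [Nat.div_lt_iff_lt_mul (by omega), mul_comm s]
  exact Nat.mul_lt_mul_of_pos_right hxN hs

lemma mem_accepted_and_div_eq_iff (hN : 0 < N) {x y : ℕ} (hy : y < s) :
    x ∈ accepted N s ∧ x * s / N = y ↔ N * y + N % s ≤ s * x ∧ s * x < N * y + N := by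
  have hdiv := Nat.mod_add_div (x * s) N
  have hmod := Nat.mod_lt (x * s) hN
  rw [accepted, mem_filter, mem_range, mul_comm s x]
  constructor
  · rintro ⟨⟨-, hacc⟩, rfl⟩
    omega
  · rintro ⟨hlo, hhi⟩
    have hq : x * s / N = y := Nat.div_eq_of_lt_le (by rw [mul_comm y]; omega)
      (by rw [add_mul, one_mul, mul_comm y]; omega)
    have hxN : x < N :=
      Nat.lt_of_mul_lt_mul_right (a := s) (by nlinarith [Nat.mul_le_mul_left N hy])
    rw [hq] at hdiv
    exact ⟨⟨hxN, by omega⟩, hq⟩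

lemma filter_accepted_div_eq (hs : 0 < s) (hN : 0 < N) {y : ℕ} (hy : y < s) :
    (accepted N s).filter (fun x => x * s / N = y)
      = Ico ((N * y + N % s) ⌈/⌉ s) ((N * y + N % s + s * (N / s)) ⌈/⌉ s) := by
  ext x
  rw [mem_filter, mem_accepted_and_div_eq_iff hN hy, Nat.mem_Ico_ceilDiv_iff hs,
    add_assoc, Nat.mod_add_div]

lemma card_filter_accepted_div_eq (hs : 0 < s) (hN : 0 < N) {y : ℕ} (hy : y < s) :
    #((accepted N s).filter (fun x => x * s / N = y)) = N / s := by
  rw [filter_accepted_div_eq hs hN hy, Nat.add_mul_ceilDiv hs, Nat.card_Ico,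
    Nat.add_sub_cancel_left]

lemma card_accepted (hs : 0 < s) (hN : 0 < N) : #(accepted N s) = s * (N / s) := by
  rw [card_eq_sum_card_fiberwise fun x hx => mem_range.mpr (div_lt_of_mem_accepted hs hx),
    sum_congr rfl fun y hy => card_filter_accepted_div_eq hs hN (mem_range.mp hy),
    sum_const, card_range, smul_eq_mul]

lemma exists_mem_accepted_div_eq (hs : 0 < s) (hsN : s ≤ N) {y : ℕ} (hy : y < s) :
    ∃ x ∈ accepted N s, x * s / N = y := by
  have hcard := card_filter_accepted_div_eq hs (hs.trans_le hsN) hy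
  obtain ⟨x, hx⟩ : ((accepted N s).filter (fun x => x * s / N = y)).Nonempty := by
    rw [← card_pos, hcard]
    exact Nat.div_pos hsN hs
  exact ⟨x, (mem_filter.mp hx).1, (mem_filter.mp hx).2⟩

end accepted

theorem accepted_surjective_and_count (s L : ℕ) (hs : 0 < s) (hsL : s < 2 ^ L) :
    (∀ y < s, ∃ x ∈ (Finset.range (2 ^ L)).filter
        (fun x => 2 ^ L % s ≤ (x * s) % 2 ^ L), (x * s) / 2 ^ L = y) ∧
    ((Finset.range (2 ^ L)).filter (fun x => 2 ^ L % s ≤ (x * s) % 2 ^ L)).card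
      = s * (2 ^ L / s) ∧
    s * (2 ^ L / s) = 2 ^ L - 2 ^ L % s :=
  ⟨fun _ hy => exists_mem_accepted_div_eq hs hsL.le hy,
    card_accepted hs (hs.trans hsL),
    Nat.eq_sub_of_add_eq (Nat.div_add_mod _ s)⟩
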